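/- For integers k ≥ r ≥ 3 and reals 0 < x < y ≤ 1/(r−1), g(x) + g(y) − xk·C(1/x, r) ≤ g(x+y), where g(x) = (1/2)·Σ_{i=0}^∞ xk·C(1/(2^i x), r) and C(·,r) is the extended binomial coefficient. -/

import Mathlib

/-!
Write `F(x) = x k C(1/x, r)`. Splitting off the `i = 0` term gives `2 g(x) = F(x) + g(2x)`, and for
`x > 0`, `F(x) = (k / r!) ∏_{j=1}^{r-1} (1/x - j)₊` is a product of nonnegative, antitone, convex
functions, hence convex. For `x ≤ y` the points `y` and `2x` lie in `[x, x + y]` and have the same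
sum as its endpoints, so `F(y) + F(2x) ≤ F(x) + F(x + y)`. This says exactly that the defect
`D(x, y) = g(x + y) - g(x) - g(y) + F(x)` satisfies `2 D(x, y) ≥ D(2x, 2y)`, and `D(x, y) ≥ 0` as
soon as `1/x < r - 1`, where `g(x)`, `g(y)` and `F(x)` all vanish; iterate.
-/

/-- The extended binomial coefficient: `z(z-1)⋯(z-r+1)/r!` when `z ≥ r-1`, and `0` otherwise. -/
noncomputable def extBinom (z : ℝ) (r : ℕ) : ℝ :=
  if (r : ℝ) - 1 ≤ z then (∏ j ∈ Finset.range r, (z - (j : ℝ))) / (Nat.factorial r) else 0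

/-- `g(x) = (1/2) Σ_{i≥0} x k C(1/(2^i x), r)` -/
noncomputable def gFun (k r : ℕ) (x : ℝ) : ℝ :=
  (1 / 2) * ∑' i : ℕ, x * (k : ℝ) * extBinom (1 / (2 ^ i * x)) r

open Finset Set

lemma ConvexOn.add_le_add_of_mem_Icc {s : Set ℝ} {f : ℝ → ℝ} (hf : ConvexOn ℝ s f)
    {a b c d : ℝ} (ha : a ∈ s) (hc : c ∈ s) (hb : b ∈ Icc a c) (hsum : b + d = a + c) :
    f b + f d ≤ f a + f c := by
  obtain rfl : d = a + c - b := by linarith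
  obtain ⟨hab, hbc⟩ := hb
  rcases hab.eq_or_lt with rfl | hab
  · simp
  have hac : 0 < c - a := by linarith
  have hp : 0 ≤ (c - b) / (c - a) := div_nonneg (by linarith) hac.le
  have hq : 0 ≤ (b - a) / (c - a) := div_nonneg (by linarith) hac.le
  have hpq : (c - b) / (c - a) + (b - a) / (c - a) = 1 := by field_simp; ring
  have hb := hf.2 ha hc hp hq hpq
  have hd := hf.2 ha hc hq hp (by rw [add_comm, hpq])
  simp only [smul_eq_mul] at hb hd
  rw [show (c - b) / (c - a) * a + (b - a) / (c - a) * c = b by field_simp; ring] at hb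
  rw [show (b - a) / (c - a) * a + (c - b) / (c - a) * c = a + c - b by field_simp; ring] at hd
  linear_combination hb + hd + (f a + f c) * hpq

lemma ConvexOn.finset_prod_of_antitoneOn {ι : Type*} {s : Set ℝ} {t : Finset ι}
    {f : ι → ℝ → ℝ} (hs : Convex ℝ s) (hf : ∀ i ∈ t, ConvexOn ℝ s (f i))
    (hf_anti : ∀ i ∈ t, AntitoneOn (f i) s) (hf_nonneg : ∀ i ∈ t, ∀ x ∈ s, 0 ≤ f i x) :
    ConvexOn ℝ s (fun x ↦ ∏ i ∈ t, f i x) := by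
  induction t using Finset.cons_induction with
  | empty => simpa using convexOn_const (1 : ℝ) hs
  | cons j t hj ih =>
    simp only [mem_cons, forall_eq_or_imp] at hf hf_anti hf_nonneg
    have hprod_anti : AntitoneOn (fun x ↦ ∏ i ∈ t, f i x) s := fun x hx y hy hxy ↦
      prod_le_prod (fun i hi ↦ hf_nonneg.2 i hi y hy) fun i hi ↦ hf_anti.2 i hi hx hy hxy
    simp only [prod_cons]
    exact hf.1.mul (ih hf.2 hf_anti.2 hf_nonneg.2) hf_nonneg.1
      (fun x hx ↦ prod_nonneg fun i hi ↦ hf_nonneg.2 i hi x hx)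
      (hf_anti.1.monovaryOn hprod_anti)

lemma convexOn_prod_max_inv_sub {ι : Type*} (t : Finset ι) (c : ι → ℝ) :
    ConvexOn ℝ (Ioi 0) (fun x ↦ ∏ i ∈ t, max (x⁻¹ - c i) 0) := by
  have hinv : ConvexOn ℝ (Ioi 0) (fun x : ℝ ↦ x⁻¹) := by
    simpa using convexOn_zpow (𝕜 := ℝ) (-1)
  refine ConvexOn.finset_prod_of_antitoneOn (convex_Ioi 0)
    (fun i _ ↦ (hinv.sub (concaveOn_const _ (convex_Ioi 0))).sup (convexOn_const _ (convex_Ioi 0)))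
    (fun i _ x hx y _ hxy ↦ max_le_max_right _ (by gcongr))
    (fun i _ x _ ↦ le_max_right _ _)

lemma extBinom_of_lt {z : ℝ} {r : ℕ} (h : z < (r : ℝ) - 1) : extBinom z r = 0 :=
  if_neg (not_le.mpr h)

lemma extBinom_eq_prod_max {r : ℕ} (hr : 1 ≤ r) (z : ℝ) :
    extBinom z r = (∏ j ∈ range r, max (z - j) 0) / r.factorial := by
  unfold extBinom
  split_ifs with h
  · congr 1
    refine prod_congr rfl fun j hj ↦ (max_eq_left ?_).symm
    have : (j : ℝ) + 1 ≤ r := by exact_mod_cast mem_range.mp hj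
    linarith
  · have hlast : ((r - 1 : ℕ) : ℝ) = r - 1 := by push_cast [hr]; ring
    have hfactor : max (z - ((r - 1 : ℕ) : ℝ)) 0 = 0 := by
      rw [hlast, max_eq_right_iff]
      linarith
    rw [prod_eq_zero (mem_range.mpr (Nat.sub_lt hr one_pos)) hfactor, zero_div]

lemma extBinom_nonneg {r : ℕ} (hr : 1 ≤ r) (z : ℝ) : 0 ≤ extBinom z r := by
  rw [extBinom_eq_prod_max hr]
  exact div_nonneg (prod_nonneg fun _ _ ↦ le_max_right _ _) (Nat.cast_nonneg _)

noncomputable def gTerm (k r : ℕ) (x : ℝ) : ℝ := x * k * extBinom (1 / x) r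

lemma gTerm_eq_prod_max {k r : ℕ} (hr : 1 ≤ r) {x : ℝ} (hx : 0 < x) :
    gTerm k r x = k / r.factorial * ∏ j ∈ range (r - 1), max (x⁻¹ - (j + 1 : ℕ)) 0 := by
  obtain ⟨m, rfl⟩ : ∃ m, r = m + 1 := ⟨r - 1, by omega⟩
  rw [gTerm, extBinom_eq_prod_max hr, prod_range_succ', Nat.cast_zero, sub_zero,
    max_eq_left (by positivity), one_div, Nat.add_sub_cancel]
  field_simp

lemma gTerm_convexOn (k : ℕ) {r : ℕ} (hr : 1 ≤ r) : ConvexOn ℝ (Ioi 0) (gTerm k r) :=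
  (((convexOn_prod_max_inv_sub _ _).smul (by positivity : (0 : ℝ) ≤ k / r.factorial))).congr
    fun _ hx ↦ (gTerm_eq_prod_max hr hx).symm

lemma gTerm_add_gTerm_le (k : ℕ) {r : ℕ} (hr : 1 ≤ r) {x y : ℝ} (hx : 0 < x) (hxy : x ≤ y) :
    gTerm k r y + gTerm k r (2 * x) ≤ gTerm k r x + gTerm k r (x + y) :=
  (gTerm_convexOn k hr).add_le_add_of_mem_Icc hx (mem_Ioi.mpr (by linarith))
    ⟨hxy, by linarith⟩ (by ring)

lemma gTerm_of_lt {k r : ℕ} {x : ℝ} (h : 1 / x < (r : ℝ) - 1) : gTerm k r x = 0 := by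
  rw [gTerm, extBinom_of_lt h, mul_zero]

lemma exists_one_div_two_pow_mul_lt {x c : ℝ} (hx : 0 < x) (hc : 0 < c) :
    ∃ N : ℕ, 1 / (2 ^ N * x) < c := by
  obtain ⟨N, hN⟩ := pow_unbounded_of_one_lt (1 / (c * x)) one_lt_two
  refine ⟨N, ?_⟩
  rw [div_lt_iff₀ (by positivity)] at hN ⊢
  linarith

lemma one_div_two_pow_mul_le {x : ℝ} (hx : 0 < x) {m n : ℕ} (hmn : m ≤ n) :
    1 / (2 ^ n * x) ≤ 1 / (2 ^ m * x) := by
  gcongr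
  exact one_le_two

lemma summable_gFun_summand (k : ℕ) {r : ℕ} (hr : 2 ≤ r) {x : ℝ} (hx : 0 < x) :
    Summable fun i : ℕ ↦ x * k * extBinom (1 / (2 ^ i * x)) r := by
  obtain ⟨N, hN⟩ := exists_one_div_two_pow_mul_lt hx (sub_pos.mpr (Nat.one_lt_cast.mpr hr))
  refine summable_of_ne_finset_zero (s := range N) fun i hi ↦ ?_
  rw [extBinom_of_lt ((one_div_two_pow_mul_le hx (by simpa using hi)).trans_lt hN), mul_zero]

lemma gFun_nonneg (k : ℕ) {r : ℕ} (hr : 1 ≤ r) {x : ℝ} (hx : 0 ≤ x) : 0 ≤ gFun k r x :=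
  mul_nonneg (by norm_num) (tsum_nonneg fun _ ↦ mul_nonneg (by positivity) (extBinom_nonneg hr _))

lemma gFun_of_lt {k r : ℕ} {x : ℝ} (hx : 0 < x) (h : 1 / x < (r : ℝ) - 1) : gFun k r x = 0 := by
  have hterm (i : ℕ) : x * k * extBinom (1 / (2 ^ i * x)) r = 0 := by
    rw [extBinom_of_lt ((one_div_two_pow_mul_le hx i.zero_le).trans_lt (by simpa using h)),
      mul_zero]
  rw [gFun, tsum_congr hterm, tsum_zero, mul_zero]

lemma two_mul_gFun (k : ℕ) {r : ℕ} (hr : 2 ≤ r) {x : ℝ} (hx : 0 < x) :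
    2 * gFun k r x = gTerm k r x + gFun k r (2 * x) := by
  have hshift (i : ℕ) : x * k * extBinom (1 / (2 ^ (i + 1) * x)) r =
      1 / 2 * (2 * x * k * extBinom (1 / (2 ^ i * (2 * x))) r) := by
    rw [show (2 : ℝ) ^ (i + 1) * x = 2 ^ i * (2 * x) by ring]
    ring
  rw [gFun, gFun, (summable_gFun_summand k hr hx).tsum_eq_zero_add, tsum_congr hshift,
    tsum_mul_left, gTerm, pow_zero, one_mul]
  ring

lemma gFun_add_gFun_sub_gTerm_le_of_lt (k : ℕ) {r : ℕ} (hr : 2 ≤ r) (n : ℕ) {x y : ℝ}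
    (hx : 0 < x) (hxy : x ≤ y) (hn : 1 / (2 ^ n * x) < (r : ℝ) - 1) :
    gFun k r x + gFun k r y - gTerm k r x ≤ gFun k r (x + y) := by
  induction n generalizing x y with
  | zero =>
    rw [pow_zero, one_mul] at hn
    have hyn : 1 / y < (r : ℝ) - 1 := (one_div_le_one_div_of_le hx hxy).trans_lt hn
    rw [gFun_of_lt hx hn, gFun_of_lt (hx.trans_le hxy) hyn, gTerm_of_lt hn]
    simpa using gFun_nonneg k (by omega) (by linarith : 0 ≤ x + y)
  | succ n ih =>
    have hy : 0 < y := hx.trans_le hxy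
    have h2 := ih (by positivity : 0 < 2 * x) (by linarith : 2 * x ≤ 2 * y)
      (by rwa [pow_succ, mul_assoc] at hn)
    have hquad := gTerm_add_gTerm_le k (by omega : 1 ≤ r) hx hxy
    have hgx := two_mul_gFun k hr hx
    have hgy := two_mul_gFun k hr hy
    have hgxy := two_mul_gFun k hr (by positivity : 0 < x + y)
    rw [mul_add] at hgxy
    linarith

theorem g_superadditive_general (k r : ℕ) (hr : 3 ≤ r) (x y : ℝ)
    (hx : 0 < x) (hxy : x < y) :
    gFun k r x + gFun k r y - x * (k : ℝ) * extBinom (1 / x) r ≤ gFun k r (x + y) := by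
  obtain ⟨N, hN⟩ :=
    exists_one_div_two_pow_mul_lt hx (sub_pos.mpr (Nat.one_lt_cast.mpr (by omega : 1 < r)))
  exact gFun_add_gFun_sub_gTerm_le_of_lt k (by omega) N hx hxy.le hN

theorem g_superadditive (k r : ℕ) (hr : 3 ≤ r) (hk : r ≤ k) (x y : ℝ)
    (hx : 0 < x) (hxy : x < y) (hy : y ≤ 1 / ((r : ℝ) - 1)) :
    gFun k r x + gFun k r y - x * (k : ℝ) * extBinom (1 / x) r ≤ gFun k r (x + y) :=
  g_superadditive_general k r hr x y hx hxy
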